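/- If each state-transition matrix A_i is a scalar multiple of the identity, A_i = a_i I with a_i ∈ ℝ, then for the block-partitioned input of k documents followed by a query, the output simplifies to y_t = C_t (Σ_{i=1}^k α_i h_{d_i} + h_q), where α_i = Π_{j=τ_i+1}^{t} a_j is a scalar, h_{d_i} is the state from processing block i alone, and h_q is the state from processing the query alone. -/

import Mathlib

open Matrix BigOperators

/-- Ordered product `A_t * A_{t-1} * ⋯ * A_s`, equal to the identity when `s > t`. -/
noncomputable def prodA {n : ℕ} (A : ℕ → Matrix (Fin n) (Fin n) ℝ) (t s : ℕ) :
    Matrix (Fin n) (Fin n) ℝ :=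
  (((List.range' s (t + 1 - s)).reverse).map A).prod

/-!
With scalar transitions the state is `h_t = ∑_{j ≤ t} (∏_{l ∈ (j, t]} a_l) • B_j x_j`. For an
input `j` of block `i`, the weight splits as `∏_{(j, t]} a = α_i · ∏_{(j, τ_i]} a`, so the
contribution of block `i` is `α_i • h_{d_i}`, and the query block contributes `h_q`.
-/

open Finset

lemma prodA_eq_prod_smul_one {n : ℕ} {A : ℕ → Matrix (Fin n) (Fin n) ℝ} {a : ℕ → ℝ}
    (hA : ∀ j, A j = a j • (1 : Matrix (Fin n) (Fin n) ℝ)) (t s : ℕ) :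
    prodA A t s = (∏ j ∈ Ico s (t + 1), a j) • (1 : Matrix (Fin n) (Fin n) ℝ) := by
  have hA' : A = algebraMap ℝ _ ∘ a := funext fun j => by
    rw [hA, Function.comp_apply, Algebra.algebraMap_eq_smul_one]
  rw [prodA, hA', ← List.map_map, ← map_list_prod, List.map_reverse, List.prod_reverse,
    Algebra.algebraMap_eq_smul_one]
  -- `Ico s (t + 1)` on `ℕ` is by definition the list `List.range' s (t + 1 - s)`
  rfl

lemma prodA_succ_mulVec_of_smul_one {n : ℕ} {A : ℕ → Matrix (Fin n) (Fin n) ℝ} {a : ℕ → ℝ}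
    (hA : ∀ j, A j = a j • (1 : Matrix (Fin n) (Fin n) ℝ)) (t j : ℕ) (v : Fin n → ℝ) :
    prodA A t (j + 1) *ᵥ v = (∏ i ∈ Ioc j t, a i) • v := by
  rw [prodA_eq_prod_smul_one hA, Ico_add_one_add_one_eq_Ioc, smul_mulVec, one_mulVec]

lemma eq_sum_prod_smul_of_rec {R M : Type*} [CommSemiring R] [AddCommMonoid M] [Module R M]
    {a : ℕ → R} {u h : ℕ → M} (h0 : h 0 = 0) (hrec : ∀ i, h (i + 1) = a (i + 1) • h i + u (i + 1))
    (t : ℕ) : h t = ∑ j ∈ Ioc 0 t, (∏ i ∈ Ioc j t, a i) • u j := by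
  induction t with
  | zero => simp [h0]
  | succ t ih =>
    rw [hrec, ih, sum_Ioc_succ_top t.zero_le, smul_sum, Ioc_self, prod_empty, one_smul]
    congr 1
    refine sum_congr rfl fun j hj => ?_
    rw [smul_smul, prod_Ioc_succ_top (mem_Ioc.mp hj).2, mul_comm]

lemma monotoneOn_Iic_of_le_succ {α : Type*} [Preorder α] {f : ℕ → α} {k : ℕ}
    (hf : ∀ i < k, f i ≤ f (i + 1)) : MonotoneOn f (Set.Iic k) := by
  intro i _ j hj hij
  induction j, hij using Nat.le_induction with
  | base => exact le_rfl
  | succ j _ ih =>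
    rw [Set.mem_Iic] at hj
    exact (ih (Set.mem_Iic.mpr (by omega))).trans (hf j (by omega))

lemma sum_Icc_sum_Ioc_consecutive {M : Type*} [AddCommMonoid M] (f : ℕ → M) {τ : ℕ → ℕ}
    (k : ℕ) (hτ : MonotoneOn τ (Set.Iic k)) :
    ∑ i ∈ Icc 1 k, ∑ j ∈ Ioc (τ (i - 1)) (τ i), f j = ∑ j ∈ Ioc (τ 0) (τ k), f j := by
  induction k with
  | zero => simp
  | succ k ih =>
    have h0k : τ 0 ≤ τ k := hτ (Set.mem_Iic.mpr (Nat.zero_le _)) (Set.mem_Iic.mpr k.le_succ)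
      k.zero_le
    have hkk : τ k ≤ τ (k + 1) := hτ (Set.mem_Iic.mpr k.le_succ) (Set.mem_Iic.mpr le_rfl) k.le_succ
    rw [sum_Icc_succ_top (by omega), ih (hτ.mono (Set.Iic_subset_Iic.mpr k.le_succ)),
      Nat.add_sub_cancel, sum_Ioc_consecutive f h0k hkk]

theorem stmt4 {n m p : ℕ} (k t : ℕ)
    (A : ℕ → Matrix (Fin n) (Fin n) ℝ) (a : ℕ → ℝ)
    (hA : ∀ j, A j = a j • (1 : Matrix (Fin n) (Fin n) ℝ))
    (B : ℕ → Matrix (Fin n) (Fin m) ℝ)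
    (C : ℕ → Matrix (Fin p) (Fin n) ℝ)
    (x : ℕ → Fin m → ℝ) (h : ℕ → Fin n → ℝ) (y : ℕ → Fin p → ℝ)
    (h0 : h 0 = 0)
    (hrec : ∀ i, h (i + 1) = A (i + 1) *ᵥ h i + B (i + 1) *ᵥ x (i + 1))
    (hy : ∀ i, y i = C i *ᵥ h i)
    (τ : ℕ → ℕ) (hτ0 : τ 0 = 0) (hτmono : ∀ i, i < k → τ i < τ (i + 1)) (hτk : τ k ≤ t)
    (hd : ℕ → Fin n → ℝ)
    (hhd : ∀ i, 1 ≤ i → i ≤ k →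
      hd i = ∑ j ∈ Finset.Ioc (τ (i - 1)) (τ i), prodA A (τ i) (j + 1) *ᵥ (B j *ᵥ x j))
    (hq : Fin n → ℝ)
    (hhq : hq = ∑ j ∈ Finset.Ioc (τ k) t, prodA A t (j + 1) *ᵥ (B j *ᵥ x j)) :
    y t = C t *ᵥ (∑ i ∈ Finset.Icc 1 k, (∏ j ∈ Finset.Ioc (τ i) t, a j) • hd i + hq) := by
  have hmono : MonotoneOn τ (Set.Iic k) := monotoneOn_Iic_of_le_succ fun i hi => (hτmono i hi).le
  have hstate : ∀ i, h (i + 1) = a (i + 1) • h i + B (i + 1) *ᵥ x (i + 1) := fun i => by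
    rw [hrec, hA, smul_mulVec, one_mulVec]
  have hblock : ∀ i ∈ Icc 1 k, (∏ j ∈ Ioc (τ i) t, a j) • hd i =
      ∑ j ∈ Ioc (τ (i - 1)) (τ i), (∏ l ∈ Ioc j t, a l) • (B j *ᵥ x j) := by
    intro i hi
    obtain ⟨hi1, hik⟩ := mem_Icc.mp hi
    have hτt : τ i ≤ t := (hmono (Set.mem_Iic.mpr hik) (Set.mem_Iic.mpr le_rfl) hik).trans hτk
    rw [hhd i hi1 hik, smul_sum]
    refine sum_congr rfl fun j hj => ?_
    rw [prodA_succ_mulVec_of_smul_one hA, smul_smul, mul_comm,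
      prod_Ioc_consecutive _ (mem_Ioc.mp hj).2 hτt]
  have hquery : hq = ∑ j ∈ Ioc (τ k) t, (∏ l ∈ Ioc j t, a l) • (B j *ᵥ x j) := by
    simp only [hhq, prodA_succ_mulVec_of_smul_one hA]
  rw [hy, eq_sum_prod_smul_of_rec (u := fun j => B j *ᵥ x j) h0 hstate, sum_congr rfl hblock,
    hquery, sum_Icc_sum_Ioc_consecutive _ k hmono, hτ0, sum_Ioc_consecutive _ (Nat.zero_le _) hτk]
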